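/- arXiv:1601.07010 — 2 statements merged into one kernel-verified Lean document; each statement's English description precedes it below -/
import Mathlib

section
/- Let A = [A^1|...|A^M] ∈ ℂ^{D×N} and B = [(A^1)_d | ... | (A^M)_d]. Then for all d ∈ {1,...,D}, ‖(B)_d − A‖_F ≤ ‖(B)_d − B‖_F + ‖B − A‖_F ≤ 3 ‖(A)_d − A‖_F. -/
open Matrix

/-- Frobenius norm of a complex matrix. -/
noncomputable def frob {m n : Type*} [Fintype m] [Fintype n] (M : Matrix m n ℂ) : ℝ :=
  Real.sqrt (∑ i, ∑ j, ‖M i j‖ ^ 2)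

/-- `B` is a best rank-`d` approximation of `A` in Frobenius norm. -/
def IsBestRankApprox {m n : Type*} [Fintype m] [Fintype n] (d : ℕ)
    (A B : Matrix m n ℂ) : Prop :=
  B.rank ≤ d ∧ ∀ C : Matrix m n ℂ, C.rank ≤ d → frob (B - A) ≤ frob (C - A)

/-- The singular values of `M` : nonnegative square roots of the eigenvalues of `M * Mᴴ`
(unsorted enumeration). -/
noncomputable def singVals {D : ℕ} {n : Type*} [Fintype n] (M : Matrix (Fin D) n ℂ) :
    Fin D → ℝ :=
  fun i => Real.sqrt ((Matrix.isHermitian_mul_conjTranspose_self M).eigenvalues i)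

/-- `C` is a scaled left-singular-vector form of `M`, i.e. `C = U Σ = M V` for some
SVD `M = U Σ Vᴴ` of `M`: equivalently `C = M V` with `V` unitary and `Cᴴ C` diagonal with
nonnegative real entries. -/
def IsScaledLeftSV {D : ℕ} {n : Type*} [Fintype n] [DecidableEq n]
    (M C : Matrix (Fin D) n ℂ) : Prop :=
  ∃ V ∈ Matrix.unitaryGroup n ℂ, C = M * V ∧
    ∃ t : n → ℝ, (∀ j, 0 ≤ t j) ∧ Cᴴ * C = Matrix.diagonal (fun j => (t j : ℂ))

/-!
The squared Frobenius norm is additive over column blocks, and every column block of a rank-`d`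
matrix has rank at most `d`. Hence the blockwise best approximation `B` beats every rank-`d`
matrix, in particular `(A)_d`: `‖B - A‖ ≤ ‖(A)_d - A‖`. Optimality of `(B)_d` against `(A)_d` and
the triangle inequality then give `‖(B)_d - B‖ ≤ ‖(A)_d - B‖ ≤ ‖(A)_d - A‖ + ‖A - B‖`.
-/

section Frobenius

attribute [local instance] Matrix.frobeniusNormedAddCommGroup

variable {m n : Type*} [Fintype m] [Fintype n]

lemma frob_eq_norm (X : Matrix m n ℂ) : frob X = ‖X‖ := by
  simp only [frob, frobenius_norm_def, Real.sqrt_eq_rpow, Real.rpow_two]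

lemma frob_sub_le (X Y Z : Matrix m n ℂ) : frob (X - Z) ≤ frob (X - Y) + frob (Y - Z) := by
  simpa only [frob_eq_norm] using norm_sub_le_norm_sub_add_norm_sub X Y Z

lemma frob_sub_comm (X Y : Matrix m n ℂ) : frob (X - Y) = frob (Y - X) := by
  simp only [frob_eq_norm, norm_sub_rev]

lemma frob_sq (X : Matrix m n ℂ) : frob X ^ 2 = ∑ i, ∑ j, ‖X i j‖ ^ 2 :=
  Real.sq_sqrt (by positivity)

end Frobenius

section Blocks

variable {m ι : Type*} [Fintype m] [Fintype ι] {κ : ι → Type*} [∀ i, Fintype (κ i)]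

def colBlock (X : Matrix m (Σ i, κ i) ℂ) (i : ι) : Matrix m (κ i) ℂ :=
  X.submatrix id (Sigma.mk i)

lemma frob_sq_eq_sum_colBlock (X : Matrix m (Σ i, κ i) ℂ) :
    frob X ^ 2 = ∑ i, frob (colBlock X i) ^ 2 := by
  simp only [frob_sq, colBlock, submatrix_apply, id, ← Finset.univ_sigma_univ, Finset.sum_sigma]
  exact Finset.sum_comm

lemma frob_sub_le_of_isBestRankApprox_colBlock {d : ℕ} {A B : Matrix m (Σ i, κ i) ℂ}
    (hB : ∀ i, IsBestRankApprox d (colBlock A i) (colBlock B i))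
    {C : Matrix m (Σ i, κ i) ℂ} (hC : C.rank ≤ d) : frob (B - A) ≤ frob (C - A) := by
  have hsq : frob (B - A) ^ 2 ≤ frob (C - A) ^ 2 := by
    rw [frob_sq_eq_sum_colBlock, frob_sq_eq_sum_colBlock]
    gcongr with i
    · exact Real.sqrt_nonneg _
    · exact (hB i).2 _ ((rank_submatrix_le C id (Sigma.mk i)).trans hC)
  exact pow_le_pow_iff_left₀ (Real.sqrt_nonneg _) (Real.sqrt_nonneg _) two_ne_zero |>.mp hsq

end Blocks

theorem stmt6_general {D M : ℕ} {N : Fin M → ℕ} (d : ℕ)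
    (A B : Matrix (Fin D) ((i : Fin M) × Fin (N i)) ℂ)
    (hB : ∀ i, IsBestRankApprox d (Matrix.of fun r c => A r ⟨i, c⟩)
            (Matrix.of fun r c => B r ⟨i, c⟩))
    (Ad : Matrix (Fin D) ((i : Fin M) × Fin (N i)) ℂ)
    (hAd : IsBestRankApprox d A Ad)
    (Bd : Matrix (Fin D) ((i : Fin M) × Fin (N i)) ℂ)
    (hBd : IsBestRankApprox d B Bd) :
    frob (Bd - A) ≤ frob (Bd - B) + frob (B - A) ∧
    frob (Bd - B) + frob (B - A) ≤ 3 * frob (Ad - A) := by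
  refine ⟨frob_sub_le Bd B A, ?_⟩
  have hBA : frob (B - A) ≤ frob (Ad - A) := frob_sub_le_of_isBestRankApprox_colBlock hB hAd.1
  calc frob (Bd - B) + frob (B - A)
      ≤ frob (Ad - B) + frob (B - A) := by gcongr; exact hBd.2 Ad hAd.1
    _ ≤ frob (Ad - A) + frob (A - B) + frob (B - A) := by gcongr; exact frob_sub_le Ad A B
    _ = frob (Ad - A) + 2 * frob (B - A) := by rw [frob_sub_comm A B]; ring
    _ ≤ 3 * frob (Ad - A) := by linarith

/-- With `B = [(A^1)_d | ... | (A^M)_d]`, for all `d ∈ {1,...,D}`,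
`‖(B)_d − A‖_F ≤ ‖(B)_d − B‖_F + ‖B − A‖_F ≤ 3 ‖(A)_d − A‖_F`. -/
theorem stmt6 {D M : ℕ} {N : Fin M → ℕ} (d : ℕ) (hd1 : 1 ≤ d) (hdD : d ≤ D)
    (A B : Matrix (Fin D) ((i : Fin M) × Fin (N i)) ℂ)
    (hB : ∀ i, IsBestRankApprox d (Matrix.of fun r c => A r ⟨i, c⟩)
            (Matrix.of fun r c => B r ⟨i, c⟩))
    (Ad : Matrix (Fin D) ((i : Fin M) × Fin (N i)) ℂ)
    (hAd : IsBestRankApprox d A Ad)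
    (Bd : Matrix (Fin D) ((i : Fin M) × Fin (N i)) ℂ)
    (hBd : IsBestRankApprox d B Bd) :
    frob (Bd - A) ≤ frob (Bd - B) + frob (B - A) ∧
    frob (Bd - B) + frob (B - A) ≤ 3 * frob (Ad - A) :=
  stmt6_general d A B hB Ad hAd Bd hBd
end

section
/- Suppose B = A + E for matrices A, E ∈ ℂ^{D×N} with ‖E‖_F ≤ ((√2 − 1)/(√(D−d) + 1)) · ‖(A)_d − A‖_F. Then ‖(B)_d − A‖_F ≤ √2 ‖(A)_d − A‖_F. -/
open Matrix

/-!
Minimality of `Bd` gives `‖Bd - A‖ ≤ ‖Bd - B‖ + ‖E‖ ≤ ‖Ad - B‖ + ‖E‖ ≤ ‖Ad - A‖ + 2‖E‖`.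
If `d < D` the coefficient in the hypothesis on `E` is at most `(√2 - 1) / 2`, which closes the
bound. If `d ≥ D`, then `A` itself has rank at most `d`, so `‖Ad - A‖ = 0` and hence `E = 0`.
-/

section Frobenius

attribute [local instance] Matrix.frobeniusNormedAddCommGroup

variable {m n : Type*} [Fintype m] [Fintype n]

lemma frob_nonneg (M : Matrix m n ℂ) : 0 ≤ frob M :=
  Real.sqrt_nonneg _

lemma frob_eq_frobenius_norm (M : Matrix m n ℂ) : frob M = ‖M‖ := by
  rw [frob, frobenius_norm_def, Real.sqrt_eq_rpow]
  norm_cast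

theorem IsBestRankApprox.frob_sub_le_add_two_mul {d : ℕ} {A E Ad Bd : Matrix m n ℂ}
    (hAd : IsBestRankApprox d A Ad) (hBd : IsBestRankApprox d (A + E) Bd) :
    frob (Bd - A) ≤ frob (Ad - A) + 2 * frob E := by
  have hmin : frob (Bd - (A + E)) ≤ frob (Ad - (A + E)) := hBd.2 Ad hAd.1
  simp only [frob_eq_frobenius_norm] at hmin ⊢
  calc ‖Bd - A‖ = ‖(Bd - (A + E)) + E‖ := by abel_nf
    _ ≤ ‖Bd - (A + E)‖ + ‖E‖ := norm_add_le _ _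
    _ ≤ ‖Ad - (A + E)‖ + ‖E‖ := by gcongr
    _ = ‖(Ad - A) - E‖ + ‖E‖ := by rw [sub_sub]
    _ ≤ ‖Ad - A‖ + 2 * ‖E‖ := by linarith [norm_sub_le (Ad - A) E]

end Frobenius

theorem IsBestRankApprox.frob_sub_eq_zero_of_card_le {m n : Type*} [Fintype m] [Fintype n]
    {d : ℕ} {A Ad : Matrix m n ℂ} (hAd : IsBestRankApprox d A Ad) (hd : Fintype.card m ≤ d) :
    frob (Ad - A) = 0 := by
  refine le_antisymm ?_ (frob_nonneg _)
  simpa [frob] using hAd.2 A (A.rank_le_card_height.trans hd)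

theorem stmt10_general {D N : ℕ} (d : ℕ)
    (A E B : Matrix (Fin D) (Fin N) ℂ) (hB : B = A + E)
    (Ad : Matrix (Fin D) (Fin N) ℂ) (hAd : IsBestRankApprox d A Ad)
    (hE : frob E ≤ (Real.sqrt 2 - 1) / (Real.sqrt ((D : ℝ) - d) + 1) * frob (Ad - A))
    (Bd : Matrix (Fin D) (Fin N) ℂ) (hBd : IsBestRankApprox d B Bd) :
    frob (Bd - A) ≤ Real.sqrt 2 * frob (Ad - A) := by
  subst hB
  have hpert := hAd.frob_sub_le_add_two_mul hBd
  rcases le_or_gt D d with hDd | hdD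
  · have hzero := hAd.frob_sub_eq_zero_of_card_le (by simpa using hDd)
    rw [hzero, mul_zero] at hE ⊢
    linarith [frob_nonneg E]
  · have hcoef : (Real.sqrt 2 - 1) / (Real.sqrt ((D : ℝ) - d) + 1) ≤ (Real.sqrt 2 - 1) / 2 := by
      have hgap : (1 : ℝ) ≤ Real.sqrt ((D : ℝ) - d) := by
        have : (d : ℝ) + 1 ≤ D := by exact_mod_cast hdD
        exact Real.one_le_sqrt.mpr (by linarith)
      have hsqrt2 : (1 : ℝ) ≤ Real.sqrt 2 := Real.one_le_sqrt.mpr (by norm_num)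
      exact div_le_div_of_nonneg_left (by linarith) (by norm_num) (by linarith)
    have := hE.trans (mul_le_mul_of_nonneg_right hcoef (frob_nonneg _))
    linarith

/-- If `B = A + E` with `‖E‖_F ≤ ((√2−1)/(√(D−d)+1)) ‖(A)_d − A‖_F`, then
`‖(B)_d − A‖_F ≤ √2 ‖(A)_d − A‖_F`. -/
theorem stmt10 {D N : ℕ} (d : ℕ) (hd1 : 1 ≤ d) (hdD : d ≤ D)
    (A E B : Matrix (Fin D) (Fin N) ℂ) (hB : B = A + E)
    (Ad : Matrix (Fin D) (Fin N) ℂ) (hAd : IsBestRankApprox d A Ad)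
    (hE : frob E ≤ (Real.sqrt 2 - 1) / (Real.sqrt ((D : ℝ) - d) + 1) * frob (Ad - A))
    (Bd : Matrix (Fin D) (Fin N) ℂ) (hBd : IsBestRankApprox d B Bd) :
    frob (Bd - A) ≤ Real.sqrt 2 * frob (Ad - A) :=
  stmt10_general d A E B hB Ad hAd hE Bd hBd
end
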